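/- For r ≥ 2 and s ≥ 3 with r,s both odd, any vertex (u_{(r+1)/2}, v_j) on the middle path-layer of the cylinder P_r □ C_s is a 4-antiresolving set, hence adim_4(P_r □ C_s) = 1. -/

import Mathlib

open SimpleGraph

/-- Two vertices have the same distances to every vertex of `S`. -/
def sameDists {V : Type*} (G : SimpleGraph V) (S : Set V) (x y : V) : Prop :=
  ∀ z ∈ S, G.dist x z = G.dist y z

/-- The equivalence class (outside `S`) of `x` under the equal-distance relation `R_S`. -/
def cls {V : Type*} (G : SimpleGraph V) (S : Set V) (x : V) : Set V :=
  {y | y ∉ S ∧ sameDists G S x y}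

/-- `S` is a `k`-antiresolving set: `S` is nonempty, does not cover `V`, and the minimum
size of an equivalence class of `R_S` on `V ∖ S` equals `k`. -/
def IsKARS {V : Type*} (G : SimpleGraph V) (k : ℕ) (S : Set V) : Prop :=
  S.Nonempty ∧ Sᶜ.Nonempty ∧
    (∀ x ∉ S, k ≤ (cls G S x).ncard) ∧ ∃ x ∉ S, (cls G S x).ncard = k

/-- The `k`-metric antidimension: the smallest cardinality of a `k`-antiresolving set,
`⊤` (i.e. `+∞`) if none exists. -/
noncomputable def adim {V : Type*} (G : SimpleGraph V) (k : ℕ) : ℕ∞ :=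
  sInf ((fun S => (S.ncard : ℕ∞)) '' {S : Set V | IsKARS G k S})

/-! In `P_r □ C_s` distances add over the two factors, and for a single vertex `c` the classes
of the relation on `V ∖ {c}` are the distance spheres about `c`. For `c` on the middle layer,
every sphere of positive radius in either factor, up to its eccentricity, has exactly two points.
A sphere of radius `t ≥ 2` about `c` in the product therefore contains a product of two such
factor spheres, the sphere of radius one contains the four neighbours, and the outermost sphere,
of radius `(r - 1) / 2 + (s - 1) / 2`, is the product of the two outermost factor spheres:
exactly four points. -/

namespace SimpleGraph

variable {V : Type*} {G : SimpleGraph V}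

def distSphere (G : SimpleGraph V) (c : V) (t : ℕ) : Set V := {x | G.dist x c = t}

@[simp]
theorem mem_distSphere {c x : V} {t : ℕ} : x ∈ G.distSphere c t ↔ G.dist x c = t := Iff.rfl

theorem Preconnected.distSphere_zero (hG : G.Preconnected) (c : V) : G.distSphere c 0 = {c} := by
  ext x
  simp [dist_eq_zero_iff_eq_or_not_reachable, hG x c]

theorem Walk.le_add_length {f : V → ℕ} (hf : ∀ ⦃a b⦄, G.Adj a b → f a ≤ f b + 1) :
    ∀ {x y : V} (w : G.Walk x y), f x ≤ f y + w.length
  | _, _, .nil => by simp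
  | _, _, .cons hadj w => by
    have := w.le_add_length hf
    have := hf hadj
    rw [Walk.length_cons]
    omega

/-- A potential that is 1-Lipschitz along edges and can be decreased by one along an edge
everywhere except at its zero `y` is the distance to `y`. -/
theorem dist_eq_of_descent (f : V → ℕ) {y : V} (hy : f y = 0)
    (hlip : ∀ ⦃a b⦄, G.Adj a b → f a ≤ f b + 1)
    (hdesc : ∀ x ≠ y, ∃ x', G.Adj x x' ∧ f x = f x' + 1) (x : V) : G.dist x y = f x := by
  have hwalk : ∀ n x, f x = n → ∃ w : G.Walk x y, w.length = n := by
    intro n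
    induction n with
    | zero =>
      intro x hx
      obtain rfl : x = y := by
        by_contra hne
        obtain ⟨x', -, hx'⟩ := hdesc x hne
        omega
      exact ⟨.nil, rfl⟩
    | succ n ih =>
      intro x hx
      obtain ⟨x', hadj, hx'⟩ := hdesc x (by rintro rfl; omega)
      obtain ⟨w, hw⟩ := ih x' (by omega)
      exact ⟨.cons hadj w, by rw [Walk.length_cons, hw]⟩
  obtain ⟨w, hw⟩ := hwalk (f x) x rfl
  obtain ⟨p, hp⟩ := w.reachable.exists_walk_length_eq_dist
  have := p.le_add_length hlip
  have := dist_le w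
  omega

theorem dist_boxProd {W : Type*} {H : SimpleGraph W} (hG : G.Preconnected) (hH : H.Preconnected)
    (x y : V × W) : (G □ H).dist x y = G.dist x.1 y.1 + H.dist x.2 y.2 := by
  simp only [dist, edist_boxProd]
  exact ENat.toNat_add (edist_ne_top_iff_reachable.2 (hG _ _))
    (edist_ne_top_iff_reachable.2 (hH _ _))

theorem pathGraph_dist {n : ℕ} (i k : Fin n) :
    (pathGraph n).dist i k = ((i : ℤ) - k).natAbs := by
  refine dist_eq_of_descent (fun i : Fin n => ((i : ℤ) - k).natAbs) (by simp)
    (fun a b hab => by rw [pathGraph_adj] at hab; omega) (fun x hx => ?_) i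
  have hx' := Fin.val_ne_of_ne hx
  rcases Nat.lt_or_gt_of_ne hx' with hlt | hgt
  · exact ⟨⟨x + 1, by omega⟩, by rw [pathGraph_adj]; simp, by simp only; omega⟩
  · exact ⟨⟨x - 1, by omega⟩, by rw [pathGraph_adj]; simp only; omega, by simp only; omega⟩

theorem cycleGraph_dist {n : ℕ} [NeZero n] (u v : Fin n) :
    (cycleGraph n).dist u v = min (u - v).val (n - (u - v).val) := by
  refine dist_eq_of_descent (fun u : Fin n => min (u - v).val (n - (u - v).val)) (by simp)
    (fun a b hab => ?_) (fun x hx => ?_) u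
  · have hsplit : a - v = (a - b) + (b - v) := by abel
    have hsplit' : b - v = (b - a) + (a - v) := by abel
    have := (a - v).isLt
    have := (b - v).isLt
    rw [cycleGraph_adj'] at hab
    rcases hab with h | h
    · rw [hsplit, Fin.val_add_eq_ite, h]
      split_ifs <;> omega
    · rw [hsplit', Fin.val_add_eq_ite, h]
      split_ifs <;> omega
  · have hxv : (x - v).val ≠ 0 := by
      rwa [Ne, Fin.val_eq_zero_iff, sub_eq_zero]
    have := (x - v).isLt
    have h1 : (1 : Fin n).val = 1 := by rw [Fin.val_one', Nat.mod_eq_of_lt (by omega)]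
    rcases le_or_gt (x - v).val (n - (x - v).val) with hle | hgt
    · refine ⟨x - 1, ?_, ?_⟩
      · rw [cycleGraph_adj', sub_sub_cancel]
        exact Or.inl h1
      · have hneg : (-1 : Fin n).val = n - 1 := by
          rw [Fin.val_neg, if_neg (fun h => by simp [h] at h1), h1]
        have : x - 1 - v = (x - v) + (-1) := by abel
        rw [this, Fin.val_add_eq_ite, hneg]
        split_ifs <;> omega
    · refine ⟨x + 1, ?_, ?_⟩
      · rw [cycleGraph_adj', add_sub_cancel_left]
        exact Or.inr h1
      · have : x + 1 - v = (x - v) + 1 := by abel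
        rw [this, Fin.val_add_eq_ite, h1]
        split_ifs <;> omega

theorem ncard_distSphere_pathGraph {n : ℕ} (i : Fin n) {a : ℕ} (ha : 0 < a) (hai : a ≤ i)
    (hain : i + a < n) : ((pathGraph n).distSphere i a).ncard = 2 := by
  have hsphere : (pathGraph n).distSphere i a = {⟨i - a, by omega⟩, ⟨i + a, hain⟩} := by
    ext x
    simp only [mem_distSphere, pathGraph_dist, Set.mem_insert_iff, Set.mem_singleton_iff,
      Fin.ext_iff]
    omega
  rw [hsphere, Set.ncard_pair (by simp [Fin.ext_iff]; omega)]

theorem ncard_distSphere_cycleGraph {n : ℕ} [NeZero n] (j : Fin n) {b : ℕ} (hb : 0 < b)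
    (hbn : 2 * b < n) : ((cycleGraph n).distSphere j b).ncard = 2 := by
  set B : Fin n := ⟨b, by omega⟩
  have hnegB : (-B).val = n - b := by
    rw [Fin.val_neg, if_neg (by simp [B, Fin.ext_iff]; omega)]
  have hsphere : (cycleGraph n).distSphere j b = {j + B, j - B} := by
    ext x
    simp only [mem_distSphere, cycleGraph_dist, Set.mem_insert_iff, Set.mem_singleton_iff]
    constructor
    · intro hx
      have := (x - j).isLt
      rcases (by omega : (x - j).val = b ∨ (x - j).val = n - b) with h | h
      · exact Or.inl (sub_eq_iff_eq_add'.1 (Fin.ext h))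
      · right
        rw [sub_eq_add_neg, ← sub_eq_iff_eq_add']
        exact Fin.ext (h.trans hnegB.symm)
    · rintro (rfl | rfl)
      · rw [add_sub_cancel_left]
        simp only [B]
        omega
      · rw [sub_sub_cancel_left, hnegB]
        omega
  rw [hsphere, Set.ncard_pair]
  intro h
  have := congrArg Fin.val (add_left_cancel (h.trans (sub_eq_add_neg j B)))
  rw [hnegB] at this
  simp only [B] at this
  omega

section boxProd

variable {W : Type*} {H : SimpleGraph W}

theorem prod_distSphere_subset_distSphere_boxProd (hG : G.Preconnected) (hH : H.Preconnected)
    (c : V × W) (a b : ℕ) :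
    G.distSphere c.1 a ×ˢ H.distSphere c.2 b ⊆ (G □ H).distSphere c (a + b) := by
  rintro x ⟨ha, hb⟩
  rw [mem_distSphere, dist_boxProd hG hH, ha, hb]

theorem distSphere_boxProd_subset_prod (hG : G.Preconnected) (hH : H.Preconnected)
    (c : V × W) {α β : ℕ} (hα : ∀ x, G.dist x c.1 ≤ α) (hβ : ∀ y, H.dist y c.2 ≤ β) :
    (G □ H).distSphere c (α + β) ⊆ G.distSphere c.1 α ×ˢ H.distSphere c.2 β := by
  intro x hx
  rw [mem_distSphere, dist_boxProd hG hH] at hx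
  have := hα x.1
  have := hβ x.2
  exact ⟨by rw [mem_distSphere]; omega, by rw [mem_distSphere]; omega⟩

theorem four_le_ncard_distSphere_boxProd [Finite V] [Finite W] (hG : G.Preconnected)
    (hH : H.Preconnected) (c : V × W) {α β : ℕ} (hα : 1 ≤ α) (hβ : 1 ≤ β)
    (hGc : ∀ a, 1 ≤ a → a ≤ α → 2 ≤ (G.distSphere c.1 a).ncard)
    (hHc : ∀ b, 1 ≤ b → b ≤ β → 2 ≤ (H.distSphere c.2 b).ncard)
    {t : ℕ} (ht : 1 ≤ t) (htαβ : t ≤ α + β) : 4 ≤ ((G □ H).distSphere c t).ncard := by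
  rcases ht.eq_or_lt with rfl | ht
  · have hsub : G.distSphere c.1 1 ×ˢ H.distSphere c.2 0 ∪ G.distSphere c.1 0 ×ˢ H.distSphere c.2 1
        ⊆ (G □ H).distSphere c 1 :=
      Set.union_subset (prod_distSphere_subset_distSphere_boxProd hG hH c 1 0)
        (prod_distSphere_subset_distSphere_boxProd hG hH c 0 1)
    have hdisj : Disjoint (G.distSphere c.1 1 ×ˢ H.distSphere c.2 0)
        (G.distSphere c.1 0 ×ˢ H.distSphere c.2 1) :=
      Set.disjoint_prod.2 (Or.inl (Set.disjoint_left.2 fun x h1 h0 => by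
        rw [mem_distSphere] at h1 h0; omega))
    calc 4 ≤ (G.distSphere c.1 1).ncard * 1 + 1 * (H.distSphere c.2 1).ncard := by
          have := hGc 1 le_rfl hα
          have := hHc 1 le_rfl hβ
          omega
      _ = (G.distSphere c.1 1 ×ˢ H.distSphere c.2 0 ∪
            G.distSphere c.1 0 ×ˢ H.distSphere c.2 1).ncard := by
          rw [Set.ncard_union_eq hdisj, Set.ncard_prod, Set.ncard_prod, hG.distSphere_zero,
            hH.distSphere_zero, Set.ncard_singleton, Set.ncard_singleton]
      _ ≤ _ := Set.ncard_le_ncard hsub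
  · obtain ⟨a, b, rfl, ha, haα, hb, hbβ⟩ :
        ∃ a b, t = a + b ∧ 1 ≤ a ∧ a ≤ α ∧ 1 ≤ b ∧ b ≤ β :=
      ⟨max 1 (t - β), t - max 1 (t - β), by omega, by omega, by omega, by omega, by omega⟩
    calc 4 ≤ (G.distSphere c.1 a).ncard * (H.distSphere c.2 b).ncard :=
          Nat.mul_le_mul (hGc a ha haα) (hHc b hb hbβ)
      _ = (G.distSphere c.1 a ×ˢ H.distSphere c.2 b).ncard := Set.ncard_prod.symm
      _ ≤ _ := Set.ncard_le_ncard (prod_distSphere_subset_distSphere_boxProd hG hH c a b)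

end boxProd

theorem cls_singleton_eq_distSphere (hG : G.Preconnected) {c x : V} (hx : x ≠ c) :
    cls G {c} x = G.distSphere c (G.dist x c) := by
  have hpos : G.dist x c ≠ 0 := fun h => hx ((hG x c).dist_eq_zero_iff.1 h)
  ext y
  simp only [cls, sameDists, Set.mem_singleton_iff, forall_eq, mem_distSphere]
  constructor
  · exact fun ⟨_, h⟩ => h.symm
  · intro h
    exact ⟨fun hyc => hpos (by rw [← h, hyc, dist_self]), h.symm⟩

theorem isKARS_singleton (hG : G.Preconnected) {k : ℕ} {c x₀ : V} (hx₀ : x₀ ≠ c)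
    (hmin : ∀ x ≠ c, k ≤ (G.distSphere c (G.dist x c)).ncard)
    (hk : (G.distSphere c (G.dist x₀ c)).ncard = k) : IsKARS G k {c} := by
  refine ⟨Set.singleton_nonempty c, ⟨x₀, hx₀⟩, fun x hx => ?_, x₀, hx₀, ?_⟩
  · rw [cls_singleton_eq_distSphere hG hx]
    exact hmin x hx
  · rw [cls_singleton_eq_distSphere hG hx₀, hk]

theorem adim_eq_one_of_isKARS_singleton [Finite V] {k : ℕ} {c : V} (h : IsKARS G k {c}) :
    adim G k = 1 := by
  refine le_antisymm (sInf_le ⟨{c}, h, by simp⟩) (le_sInf ?_)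
  rintro _ ⟨S, hS, rfl⟩
  show (1 : ℕ∞) ≤ S.ncard
  exact_mod_cast Nat.one_le_iff_ne_zero.2 (Set.ncard_ne_zero_of_mem hS.1.some_mem)

end SimpleGraph

theorem isKARS_four_boxProd_pathGraph_cycleGraph {r s : ℕ} (c : Fin r × Fin s)
    (hr : 2 ≤ r) (hc : 2 * c.1.val + 1 = r) (hs : 3 ≤ s) (hso : Odd s) :
    IsKARS ((pathGraph r).boxProd (cycleGraph s)) 4 {c} := by
  have : NeZero s := ⟨by omega⟩
  obtain ⟨h, rfl⟩ := hso
  have hG := pathGraph_preconnected r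
  have hH := cycleGraph_preconnected (n := 2 * h + 1)
  have hα : ∀ i, (pathGraph r).dist i c.1 ≤ c.1.val := fun i => by
    rw [pathGraph_dist]; omega
  have hβ : ∀ v, (cycleGraph (2 * h + 1)).dist v c.2 ≤ h := fun v => by
    rw [cycleGraph_dist]; omega
  have hGc : ∀ a, 1 ≤ a → a ≤ c.1.val → ((pathGraph r).distSphere c.1 a).ncard = 2 :=
    fun a ha hac => ncard_distSphere_pathGraph c.1 ha hac (by omega)
  have hHc : ∀ b, 1 ≤ b → b ≤ h → ((cycleGraph (2 * h + 1)).distSphere c.2 b).ncard = 2 :=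
    fun b hb hbh => ncard_distSphere_cycleGraph c.2 hb (by omega)
  have hfour : ∀ t, 1 ≤ t → t ≤ c.1.val + h →
      4 ≤ (((pathGraph r).boxProd (cycleGraph (2 * h + 1))).distSphere c t).ncard :=
    fun t ht htmax => four_le_ncard_distSphere_boxProd hG hH c (by omega) (by omega)
      (fun a ha hac => (hGc a ha hac).ge) (fun b hb hbh => (hHc b hb hbh).ge) ht htmax
  have hecc : (((pathGraph r).boxProd (cycleGraph (2 * h + 1))).distSphere c (c.1.val + h)).ncard
      = 4 := by
    refine le_antisymm ?_ (hfour _ (by omega) le_rfl)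
    calc _ ≤ ((pathGraph r).distSphere c.1 c.1.val ×ˢ
            (cycleGraph (2 * h + 1)).distSphere c.2 h).ncard :=
          Set.ncard_le_ncard (distSphere_boxProd_subset_prod hG hH c hα hβ)
      _ = 4 := by rw [Set.ncard_prod, hGc _ (by omega) le_rfl, hHc _ (by omega) le_rfl]
  obtain ⟨x₀, hx₀⟩ := Set.nonempty_of_ncard_ne_zero (hecc ▸ four_ne_zero)
  rw [mem_distSphere] at hx₀
  refine isKARS_singleton (hG.boxProd hH) (x₀ := x₀) ?_ (fun x hx => ?_) (by rw [hx₀, hecc])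
  · rintro rfl
    rw [dist_self] at hx₀
    omega
  · have := (hG.boxProd hH x c).pos_dist_of_ne hx
    have := dist_boxProd hG hH x c
    exact hfour _ (by omega) (by have := hα x.1; have := hβ x.2; omega)

-- The middle vertex `u_{(r+1)/2}` of `P_r` is `(r - 1) / 2 : Fin r`.
/-- For odd `r, s` with `r ≥ 2`, `s ≥ 3`, any vertex `(u_{(r+1)/2}, v_j)` on the middle
path-layer of the cylinder `P_r □ C_s` is a 4-ARS, hence `adim_4(P_r □ C_s) = 1`.
(With vertices of `P_r` indexed `u_1, …, u_r`, the middle vertex `u_{(r+1)/2}`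
corresponds to index `(r-1)/2` in `Fin r`.) -/
theorem stmt10 (r s : ℕ) (hr : 2 ≤ r) (hs : 3 ≤ s) (hro : Odd r) (hso : Odd s) :
    (∀ j : Fin s, IsKARS ((pathGraph r).boxProd (cycleGraph s)) 4
      {((⟨(r - 1) / 2, by omega⟩ : Fin r), j)}) ∧
    adim ((pathGraph r).boxProd (cycleGraph s)) 4 = 1 := by
  have hc : 2 * ((r - 1) / 2) + 1 = r := by
    obtain ⟨k, hk⟩ := hro
    omega
  have hmid : ∀ j : Fin s, IsKARS ((pathGraph r).boxProd (cycleGraph s)) 4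
      {((⟨(r - 1) / 2, by omega⟩ : Fin r), j)} := fun j =>
    isKARS_four_boxProd_pathGraph_cycleGraph _ hr hc hs hso
  exact ⟨hmid, adim_eq_one_of_isKARS_singleton (hmid ⟨0, by omega⟩)⟩
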